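/- Let G be a topological group, H ≤ G closed with G/H admitting local cross sections, Y a locally compact Hausdorff H-space, and V a continuous G-module. The map μ sending f ∈ Ind_H^G C(Y, res V) = {f ∈ C(G, C(Y,V)) : f(gh⁻¹) = h·f(g)} to the function on G ×_H Y induced by (g,y) ↦ g·(f(g)(y)) is a well-defined G-equivariant linear homeomorphism onto C(G ×_H Y, V), where G acts on C(G ×_H Y, V) by (α·f)(x) = α·f(α⁻¹·x). -/

import Mathlib

/-! Equivariance of `f` makes `(g, y) ↦ g • f g y` constant on `H`-orbits, and
`F ↦ (g ↦ y ↦ g⁻¹ • F [g, y])` is the inverse map. A map into a compact-open function space is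
continuous once its uncurried form is, and evaluation is jointly continuous on locally compact
domains. For `f ↦ μ f` the uncurried map is checked after precomposing with the product of the
identity and `G × Y → G ×_H Y`; this is a quotient map because `G × Y → G ×_H Y` is open, the
saturation of an open set being a union of translates. -/

/-- A map q : A → B admits local (continuous) cross sections. -/
def HasLocalSections {A B : Type*} [TopologicalSpace A] [TopologicalSpace B]
    (q : A → B) : Prop :=
  ∀ b : B, ∃ (U : Set B) (s : B → A),
    IsOpen U ∧ b ∈ U ∧ ContinuousOn s U ∧ ∀ x ∈ U, q (s x) = x

/-- The diagonal H-action relation on G × Y defining the associated bundle G ×_H Y. -/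
def assocRel {G : Type*} [Group G] (H : Subgroup G) (Y : Type*) [MulAction H Y] :
    G × Y → G × Y → Prop :=
  fun p q => ∃ h : H, q.1 = p.1 * (h : G)⁻¹ ∧ q.2 = h • p.2

/-- The induced module Ind_H^G C(Y, res V): continuous maps f : G → C(Y,V) with
f(gh⁻¹) = h·f(g), where H acts on C(Y,V) by (h·φ)(y) = h·φ(h⁻¹·y). -/
abbrev IndC {G : Type*} [Group G] [TopologicalSpace G] (H : Subgroup G)
    (Y V : Type*) [TopologicalSpace Y] [MulAction H Y] [TopologicalSpace V]
    [SMul G V] : Type _ :=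
  {f : C(G, C(Y, V)) //
    ∀ (h : H) (g : G) (y : Y), f (g * (h : G)⁻¹) y = (h : G) • f g (h⁻¹ • y)}

section AssocBundle

variable {G Y : Type*} [Group G] {H : Subgroup G} [MulAction H Y]

theorem assocRel_equivalence : Equivalence (assocRel H Y) where
  refl _ := ⟨1, by simp, by simp⟩
  symm := by
    rintro ⟨g, y⟩ ⟨g', y'⟩ ⟨h, rfl, rfl⟩
    exact ⟨h⁻¹, by simp, by simp⟩
  trans := by
    rintro ⟨g, y⟩ ⟨g', y'⟩ ⟨g'', y''⟩ ⟨h, rfl, rfl⟩ ⟨h', rfl, rfl⟩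
    exact ⟨h' * h, by simp [mul_assoc], by simp [mul_smul]⟩

theorem quot_mk_assocRel_eq_iff {a b : G × Y} :
    Quot.mk (assocRel H Y) a = Quot.mk (assocRel H Y) b ↔ assocRel H Y a b :=
  Quot.eq.trans assocRel_equivalence.eqvGen_iff

theorem isOpenQuotientMap_quot_mk_assocRel [TopologicalSpace G] [ContinuousMul G]
    [TopologicalSpace Y] [ContinuousConstSMul H Y] :
    IsOpenQuotientMap (Quot.mk (assocRel H Y)) := by
  refine ⟨Quot.mk_surjective, continuous_quot_mk, fun W hW => ?_⟩
  rw [← isQuotientMap_quot_mk.isOpen_preimage]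
  have saturation : Quot.mk (assocRel H Y) ⁻¹' (Quot.mk (assocRel H Y) '' W)
      = ⋃ h : H, (fun p : G × Y => (p.1 * (h : G)⁻¹, h • p.2)) ⁻¹' W := by
    ext ⟨g, y⟩
    simp only [Set.mem_preimage, Set.mem_image, Set.mem_iUnion, quot_mk_assocRel_eq_iff]
    constructor
    · rintro ⟨w, hw, h, rfl, rfl⟩
      exact ⟨h⁻¹, by simpa using hw⟩
    · rintro ⟨h, hw⟩
      exact ⟨_, hw, h⁻¹, by simp, by simp⟩
  rw [saturation]
  exact isOpen_iUnion fun h =>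
    hW.preimage ((continuous_fst.mul continuous_const).prodMk (continuous_snd.const_smul h))

end AssocBundle

namespace IndC

variable {G Y V : Type*} [Group G] [TopologicalSpace G] [TopologicalSpace Y]
  {H : Subgroup G} [MulAction H Y] [TopologicalSpace V] [MulAction G V]

theorem smul_apply_eq_of_assocRel (f : IndC H Y V) :
    ∀ {a b : G × Y}, assocRel H Y a b → a.1 • f.1 a.1 a.2 = b.1 • f.1 b.1 b.2 := by
  rintro ⟨g, y⟩ ⟨_, _⟩ ⟨h, rfl, rfl⟩
  rw [f.2 h g (h • y), inv_smul_smul, smul_smul, inv_mul_cancel_right]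

variable [ContinuousSMul G V]

def toAssoc [LocallyCompactSpace Y] (f : IndC H Y V) : C(Quot (assocRel H Y), V) where
  toFun := Quot.lift (fun p => p.1 • f.1 p.1 p.2) fun _ _ => f.smul_apply_eq_of_assocRel
  continuous_toFun := continuous_quot_lift _ <|
    continuous_fst.smul (ContinuousMap.continuous_uncurry_of_continuous f.1)

@[simp]
theorem toAssoc_mk [LocallyCompactSpace Y] (f : IndC H Y V) (g : G) (y : Y) :
    f.toAssoc (Quot.mk _ (g, y)) = g • f.1 g y :=
  rfl

theorem continuous_toAssoc [LocallyCompactSpace G] [LocallyCompactSpace Y] [ContinuousMul G]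
    [ContinuousConstSMul H Y] :
    Continuous (toAssoc : IndC H Y V → C(Quot (assocRel H Y), V)) := by
  refine ContinuousMap.continuous_of_continuous_uncurry _ ?_
  rw [← (IsOpenQuotientMap.id.prodMap isOpenQuotientMap_quot_mk_assocRel).continuous_comp_iff]
  exact continuous_snd.fst.smul <|
    (continuous_subtype_val.comp continuous_fst).eval continuous_snd.fst |>.eval continuous_snd.snd

variable [ContinuousInv G]

def ofAssoc (F : C(Quot (assocRel H Y), V)) : IndC H Y V :=
  ⟨ContinuousMap.curry ⟨fun p => p.1⁻¹ • F (Quot.mk _ p),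
      continuous_fst.inv.smul (F.continuous.comp continuous_quot_mk)⟩,
    fun h g y => by
      have hmk : Quot.mk (assocRel H Y) (g * (h : G)⁻¹, y) = Quot.mk _ (g, h⁻¹ • y) :=
        Quot.sound ⟨h⁻¹, by simp, rfl⟩
      simp [hmk, mul_smul]⟩

@[simp]
theorem ofAssoc_apply (F : C(Quot (assocRel H Y), V)) (g : G) (y : Y) :
    (ofAssoc F).1 g y = g⁻¹ • F (Quot.mk _ (g, y)) :=
  rfl

theorem continuous_ofAssoc [LocallyCompactSpace G] [LocallyCompactSpace Y] :
    Continuous (ofAssoc : C(Quot (assocRel H Y), V) → IndC H Y V) := by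
  refine Continuous.subtype_mk (ContinuousMap.continuous_curry.comp ?_) _
  refine ContinuousMap.continuous_of_continuous_uncurry _ ?_
  have hprecomp :=
    ContinuousMap.continuous_precomp (Z := V) ⟨_, continuous_quot_mk (r := assocRel H Y)⟩
  exact continuous_snd.fst.inv.smul <| (hprecomp.comp continuous_fst).eval continuous_snd

variable [LocallyCompactSpace Y]

theorem ofAssoc_toAssoc (f : IndC H Y V) : ofAssoc f.toAssoc = f := by
  ext g y
  simp

theorem toAssoc_ofAssoc (F : C(Quot (assocRel H Y), V)) : (ofAssoc F).toAssoc = F := by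
  ext z
  obtain ⟨⟨g, y⟩, rfl⟩ := Quot.mk_surjective z
  simp

def homeomorphAssoc [LocallyCompactSpace G] [ContinuousMul G] [ContinuousConstSMul H Y] :
    IndC H Y V ≃ₜ C(Quot (assocRel H Y), V) where
  toFun := toAssoc
  invFun := ofAssoc
  left_inv := ofAssoc_toAssoc
  right_inv := toAssoc_ofAssoc
  continuous_toFun := continuous_toAssoc
  continuous_invFun := continuous_ofAssoc

@[simp]
theorem coe_homeomorphAssoc [LocallyCompactSpace G] [ContinuousMul G] [ContinuousConstSMul H Y] :
    ⇑(homeomorphAssoc : IndC H Y V ≃ₜ C(Quot (assocRel H Y), V)) = toAssoc :=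
  rfl

end IndC

theorem stmt5_general {G Y V : Type*} [Group G] [TopologicalSpace G] [IsTopologicalGroup G]
    [LocallyCompactSpace G]
    [TopologicalSpace Y] [LocallyCompactSpace Y]
    (H : Subgroup G) [MulAction H Y] [ContinuousSMul H Y]
    [AddCommGroup V] [Module ℝ V] [TopologicalSpace V]
    [DistribMulAction G V] [ContinuousSMul G V]
    [SMulCommClass G ℝ V] :
    ∃ e : IndC H Y V ≃ₜ C(Quot (assocRel H Y), V),
      (∀ (f : IndC H Y V) (g : G) (y : Y),
        e f (Quot.mk (assocRel H Y) (g, y)) = g • (f.1 g y)) ∧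
      (∀ (f₁ f₂ f₃ : IndC H Y V), (∀ g y, f₃.1 g y = f₁.1 g y + f₂.1 g y) →
        ∀ z, e f₃ z = e f₁ z + e f₂ z) ∧
      (∀ (c : ℝ) (f₁ f₂ : IndC H Y V), (∀ g y, f₂.1 g y = c • f₁.1 g y) →
        ∀ z, e f₂ z = c • e f₁ z) ∧
      (∀ (α : G) (f₁ f₂ : IndC H Y V), (∀ g y, f₂.1 g y = f₁.1 (α⁻¹ * g) y) →
        ∀ (g : G) (y : Y),
          e f₂ (Quot.mk (assocRel H Y) (g, y))
            = α • e f₁ (Quot.mk (assocRel H Y) (α⁻¹ * g, y))) := by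
  refine ⟨IndC.homeomorphAssoc, fun _ _ _ => rfl, ?_, ?_, ?_⟩
  · rintro f₁ f₂ f₃ hadd ⟨g, y⟩
    simp [hadd]
  · rintro c f₁ f₂ hsmul ⟨g, y⟩
    simp [hsmul, smul_comm g c]
  · intro α f₁ f₂ htranslate g y
    simp [htranslate, smul_smul]

/-- The map μ : Ind_H^G C(Y, res V) → C(G ×_H Y, V), induced by
(g,y) ↦ g·(f(g)(y)), is a well-defined G-equivariant linear homeomorphism. -/
theorem stmt5 {G Y V : Type*} [Group G] [TopologicalSpace G] [IsTopologicalGroup G]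
    [LocallyCompactSpace G] [T2Space G]
    [TopologicalSpace Y] [LocallyCompactSpace Y] [T2Space Y]
    (H : Subgroup G) (hH : IsClosed (H : Set G)) [MulAction H Y] [ContinuousSMul H Y]
    [AddCommGroup V] [Module ℝ V] [TopologicalSpace V] [IsTopologicalAddGroup V]
    [ContinuousSMul ℝ V] [DistribMulAction G V] [ContinuousSMul G V]
    [SMulCommClass G ℝ V]
    (hGH : HasLocalSections (QuotientGroup.mk : G → G ⧸ H)) :
    ∃ e : IndC H Y V ≃ₜ C(Quot (assocRel H Y), V),
      (∀ (f : IndC H Y V) (g : G) (y : Y),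
        e f (Quot.mk (assocRel H Y) (g, y)) = g • (f.1 g y)) ∧
      (∀ (f₁ f₂ f₃ : IndC H Y V), (∀ g y, f₃.1 g y = f₁.1 g y + f₂.1 g y) →
        ∀ z, e f₃ z = e f₁ z + e f₂ z) ∧
      (∀ (c : ℝ) (f₁ f₂ : IndC H Y V), (∀ g y, f₂.1 g y = c • f₁.1 g y) →
        ∀ z, e f₂ z = c • e f₁ z) ∧
      (∀ (α : G) (f₁ f₂ : IndC H Y V), (∀ g y, f₂.1 g y = f₁.1 (α⁻¹ * g) y) →
        ∀ (g : G) (y : Y),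
          e f₂ (Quot.mk (assocRel H Y) (g, y))
            = α • e f₁ (Quot.mk (assocRel H Y) (α⁻¹ * g, y))) :=
  stmt5_general H
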